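/- Let V be a real vector space of even finite dimension n and g a nondegenerate symmetric bilinear form on V. Let c₊ ∈ ℝ, let J₊, J₋ ∈ End(V) be g-skew-symmetric, and let X₊, X₋ ∈ V satisfy g(X₊,X₊) = g(X₋,X₋) = 1 − c₊², g(X₊,X₋) = 0, J₋² = −id_V, J₊X₊ = −c₊X₋, J₊X₋ = c₊X₊ and J₊²X = −X + g(X,X₊)X₊ + g(X,X₋)X₋ for all X ∈ V. Define ℱ ∈ End(E(V)) by ℱ(X − g(X,·)) = J₋X − g(J₋X,·) and ℱ(X + g(X,·) + a) = (J₊X + aX₋) + g(J₊X + aX₋, ·) + (−g(X₋,X)) for all X ∈ V and a ∈ ℝ. Then ℱ is ⟨·,·⟩-skew-symmetric, ℱ commutes with the standard generalized metric endomorphism G, the kernel of ℱ is spanned by u₊ := X₊ + g(X₊,·) + c₊, ⟨u₊,u₊⟩ = 1, and ℱ² = −Id + ⟨·,u₊⟩u₊. In other words, ℱ is a Bₙ-generalized almost complex structure on E(V) commuting with G, so (G, ℱ) is a Bₙ-generalized almost pseudo-Hermitian structure with components (g, J₊, J₋, X₊, X₋, c₊). -/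
import Mathlib


/-- The odd generalized tangent space `E(V) = V ⊕ V* ⊕ ℝ`. -/
abbrev EV (V : Type*) [AddCommGroup V] [Module ℝ V] : Type _ :=
  V × (V →ₗ[ℝ] ℝ) × ℝ

/-- The canonical scalar product of `E(V)`:
`⟨X+ξ+λ, Y+η+μ⟩ = (1/2)(η(X)+ξ(Y)) + λμ`. -/
noncomputable def spEV {V : Type*} [AddCommGroup V] [Module ℝ V]
    (p q : EV V) : ℝ :=
  (1 / 2) * (q.2.1 p.1 + p.2.1 q.1) + p.2.2 * q.2.2

/-- Proposition 4.2 ii) (pointwise, construction direction, `n` even):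
the endomorphism `ℱ` of `E(V)` built from components `(g, J₊, J₋, X₊, X₋, c₊)` is a
`⟨·,·⟩`-skew-symmetric endomorphism commuting with the standard generalized metric
endomorphism `G`, with kernel spanned by `u₊ = X₊ + g(X₊,·) + c₊`, `⟨u₊,u₊⟩ = 1`, and
`ℱ² = −Id + ⟨·,u₊⟩u₊`. -/
theorem stmt_4 {V : Type*} [AddCommGroup V] [Module ℝ V] [FiniteDimensional ℝ V]
    (heven : Even (Module.finrank ℝ V))
    (g : LinearMap.BilinForm ℝ V)
    (hgsymm : ∀ x y, g x y = g y x)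
    (hgnd : ∀ x, (∀ y, g x y = 0) → x = 0)
    (c : ℝ)
    (Jp Jm : V →ₗ[ℝ] V)
    (hJpskew : ∀ x y, g (Jp x) y = - g x (Jp y))
    (hJmskew : ∀ x y, g (Jm x) y = - g x (Jm y))
    (Xp Xm : V)
    (hXp : g Xp Xp = 1 - c ^ 2) (hXm : g Xm Xm = 1 - c ^ 2)
    (hXpXm : g Xp Xm = 0)
    (hJm2 : ∀ x, Jm (Jm x) = -x)
    (hJpXp : Jp Xp = -c • Xm) (hJpXm : Jp Xm = c • Xp)
    (hJp2 : ∀ x, Jp (Jp x) = -x + g x Xp • Xp + g x Xm • Xm)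
    (F : EV V →ₗ[ℝ] EV V)
    (hFminus : ∀ X : V, F (X, -(g X), 0) = (Jm X, -(g (Jm X)), 0))
    (hFplus : ∀ (X : V) (a : ℝ),
      F (X, g X, a) = (Jp X + a • Xm, g (Jp X + a • Xm), -(g Xm X))) :
    (∀ p q : EV V, spEV (F p) q = - spEV p (F q)) ∧
    (∀ G : EV V →ₗ[ℝ] EV V,
      (∀ X : V, G (X, -(g X), 0) = (-X, g X, 0)) →
      (∀ (X : V) (a : ℝ), G (X, g X, a) = (X, g X, a)) →
      ∀ p : EV V, F (G p) = G (F p)) ∧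
    LinearMap.ker F = Submodule.span ℝ {((Xp, g Xp, c) : EV V)} ∧
    spEV ((Xp, g Xp, c) : EV V) ((Xp, g Xp, c) : EV V) = 1 ∧
    (∀ p : EV V,
      F (F p) = -p + spEV p ((Xp, g Xp, c) : EV V) • ((Xp, g Xp, c) : EV V)) := by
  classical
  -- `g` as a map `V → V*` is bijective
  have hginj : Function.Injective g := by
    rw [← LinearMap.ker_eq_bot, LinearMap.ker_eq_bot']
    intro x hx
    exact hgnd x fun y => by rw [hx]; rfl
  have hgsurj : Function.Surjective g := by
    refine (LinearMap.injective_iff_surjective_of_finrank_eq_finrank ?_).mp hginj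
    exact (Subspace.dual_finrank_eq (K := ℝ) (V := V)).symm
  -- decomposition of any element of E(V)
  have key : ∀ p : EV V, ∃ (A B : V) (a : ℝ),
      p = ((A, -(g A), (0:ℝ)) : EV V) + ((B, g B, a) : EV V) := by
    intro p
    obtain ⟨Y, hY⟩ := hgsurj p.2.1
    refine ⟨(2⁻¹:ℝ) • (p.1 - Y), (2⁻¹:ℝ) • (p.1 + Y), p.2.2, ?_⟩
    have h1 : (2⁻¹:ℝ) • (p.1 - Y) + (2⁻¹:ℝ) • (p.1 + Y) = p.1 := by module
    have h2 : -(g ((2⁻¹:ℝ) • (p.1 - Y))) + g ((2⁻¹:ℝ) • (p.1 + Y)) = p.2.1 := by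
      rw [← hY]; ext y
      simp [map_sub, map_add]
      ring
    refine Prod.ext ?_ (Prod.ext ?_ ?_)
    · exact h1.symm
    · exact h2.symm
    · exact (zero_add _).symm
  have Fkey : ∀ (A B : V) (a : ℝ),
      F (((A, -(g A), 0) : EV V) + (B, g B, a))
        = ((Jm A, -(g (Jm A)), 0) : EV V)
          + (Jp B + a • Xm, g (Jp B + a • Xm), -(g Xm B)) := by
    intro A B a
    rw [map_add, hFminus, hFplus]
  -- scalar product computations
  have spadd : ∀ p p' q : EV V, spEV (p + p') q = spEV p q + spEV p' q := by
    intro p p' q; simp [spEV]; ring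
  have spadd' : ∀ p q q' : EV V, spEV p (q + q') = spEV p q + spEV p q' := by
    intro p q q'; simp [spEV]; ring
  have spmm : ∀ X Y : V,
      spEV ((X, -(g X), 0) : EV V) ((Y, -(g Y), 0) : EV V) = - g X Y := by
    intro X Y; simp only [spEV, LinearMap.neg_apply]; linear_combination (-(1/2) : ℝ) * hgsymm Y X
  have spmp : ∀ (X Y : V) (b : ℝ),
      spEV ((X, -(g X), 0) : EV V) ((Y, g Y, b) : EV V) = 0 := by
    intro X Y b; simp only [spEV, LinearMap.neg_apply]; linear_combination (1/2 : ℝ) * hgsymm Y X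
  have sppm : ∀ (X : V) (a : ℝ) (Y : V),
      spEV ((X, g X, a) : EV V) ((Y, -(g Y), 0) : EV V) = 0 := by
    intro X a Y; simp only [spEV, LinearMap.neg_apply]; linear_combination (-(1/2) : ℝ) * hgsymm Y X
  have sppp : ∀ (X : V) (a : ℝ) (Y : V) (b : ℝ),
      spEV ((X, g X, a) : EV V) ((Y, g Y, b) : EV V) = g X Y + a * b := by
    intro X a Y b; simp only [spEV]; linear_combination (1/2 : ℝ) * hgsymm Y X
  refine ⟨?_, ?_, ?_, ?_, ?_⟩
  · -- skew-symmetry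
    intro p q
    obtain ⟨A1, B1, a1, hp⟩ := key p
    obtain ⟨A2, B2, a2, hq⟩ := key q
    rw [hp, hq, Fkey, Fkey]
    simp only [spadd, spadd', spmm, spmp, sppm, sppp]
    simp only [map_add, map_smul, LinearMap.add_apply, LinearMap.smul_apply, smul_eq_mul]
    linear_combination - hJmskew A1 A2 + hJpskew B1 B2 - a2 * hgsymm Xm B1
  · -- commutation with G
    intro G hGm hGp p
    obtain ⟨A, B, a, hp⟩ := key p
    have hGm' : ∀ X : V, G ((X, -(g X), 0) : EV V) = -((X, -(g X), 0) : EV V) := by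
      intro X; rw [hGm]
      refine Prod.ext ?_ (Prod.ext ?_ ?_) <;> simp
    rw [hp]
    simp only [F.map_add, G.map_add, F.map_neg, G.map_neg, hGm', hGp, hFminus, hFplus]
  · -- kernel
    apply le_antisymm
    · -- ker ⊆ span
      intro p hpk
      rw [LinearMap.mem_ker] at hpk
      obtain ⟨A, B, a, hp⟩ := key p
      rw [hp, Fkey] at hpk
      have hzero : ((0 : EV V)) = ((0 : V), (0 : V →ₗ[ℝ] ℝ), (0:ℝ)) := rfl
      rw [hzero, Prod.mk_add_mk, Prod.mk_add_mk, Prod.mk.injEq, Prod.mk.injEq] at hpk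
      obtain ⟨h1, h2, h3⟩ := hpk
      have h3' : g Xm B = 0 := by
        have h3'' : (0:ℝ) + -(g Xm B) = 0 := h3
        linarith
      have h2' : Jp B + a • Xm = Jm A := by
        apply hginj
        rw [neg_add_eq_zero] at h2
        exact h2.symm
      have hJmA : Jm A = 0 := by
        rw [h2'] at h1
        have h1' : (2:ℝ) • Jm A = 0 := by rw [two_smul]; exact h1
        rcases smul_eq_zero.mp h1' with h | h
        · norm_num at h
        · exact h
      have hA : A = 0 := by
        have h := hJm2 A
        rw [hJmA, map_zero] at h
        exact neg_eq_zero.mp h.symm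
      have hplus0 : Jp B + a • Xm = 0 := by rw [h2', hJmA]
      have hBXm : g B Xm = 0 := by rw [hgsymm]; exact h3'
      have happ : Jp (Jp B) + a • Jp Xm = 0 := by
        have h := congrArg Jp hplus0
        simpa [map_add, map_smul] using h
      rw [hJp2 B, hJpXm, hBXm, zero_smul, add_zero] at happ
      -- happ : -B + g B Xp • Xp + a • c • Xp = 0
      set t : ℝ := g B Xp + a * c with ht
      have hB : B = t • Xp := by
        have e : B - t • Xp = -(-B + g B Xp • Xp + a • c • Xp) := by
          rw [ht]; module
        rw [happ, neg_zero] at e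
        exact sub_eq_zero.mp e
      rw [Submodule.mem_span_singleton]
      by_cases hXm0 : Xm = 0
      · -- degenerate case `Xm = 0`, `c² = 1`, `Xp = 0`
        have hc2 : c ^ 2 = 1 := by
          have h := hXm
          rw [hXm0] at h
          simp at h
          linarith
        have hc0 : c ≠ 0 := by
          intro h; rw [h] at hc2; norm_num at hc2
        have hXp0 : Xp = 0 := by
          have h : c • Xp = 0 := by rw [← hJpXm, hXm0, map_zero]
          exact (smul_eq_zero.mp h).resolve_left hc0
        have hB0 : B = 0 := by rw [hB, hXp0, smul_zero]
        refine ⟨a * c, ?_⟩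
        rw [hp, hA, hB0, hXp0]
        have : ((0:V), -(g 0), (0:ℝ)) + ((0:V), g 0, a) = ((0:V), g 0, a) := by
          refine Prod.ext ?_ (Prod.ext ?_ ?_) <;> simp
        rw [this]
        refine Prod.ext ?_ (Prod.ext ?_ ?_)
        · simp
        · simp
        · simp; linear_combination a * hc2
      · have hac : a = t * c := by
          have h := hplus0
          rw [hB, map_smul, hJpXp] at h
          have e : (a - t * c) • Xm = t • (-c • Xm) + a • Xm := by module
          rw [h] at e
          have h4 := (smul_eq_zero.mp e).resolve_right hXm0
          linarith
        refine ⟨t, ?_⟩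
        rw [hp, hA]
        refine Prod.ext ?_ (Prod.ext ?_ ?_)
        · simp [hB]
        · simp
          ext y
          rw [hB]
          simp [map_smul]
        · simp [hac, mul_comm]
    · rw [Submodule.span_le, Set.singleton_subset_iff]
      have h0 : F ((Xp, g Xp, c) : EV V) = 0 := by
        rw [hFplus, hJpXp]
        have h1 : -c • Xm + c • Xm = (0 : V) := by module
        have h2 : g Xm Xp = 0 := by rw [hgsymm]; exact hXpXm
        rw [h1, h2, neg_zero, map_zero]
        rfl
      exact LinearMap.mem_ker.mpr h0
  · -- norm of u₊
    rw [sppp]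
    linear_combination hXp
  · -- F² = -Id + ⟨·,u₊⟩ u₊
    intro p
    obtain ⟨A, B, a, hp⟩ := key p
    have hs : spEV p ((Xp, g Xp, c) : EV V) = g B Xp + a * c := by
      rw [hp, spadd, spmp, sppp, zero_add]
    rw [hs, hp, Fkey, Fkey]
    have hsym : g B Xm = g Xm B := hgsymm B Xm
    refine Prod.ext ?_ (Prod.ext ?_ ?_)
    · show Jm (Jm A) + (Jp (Jp B + a • Xm) + -(g Xm) B • Xm)
        = -((A, -(g A), (0:ℝ)) + (B, g B, a)).1 + (g B Xp + a * c) • Xp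
      rw [map_add, map_smul, hJp2, hJpXm, hJm2, hsym]
      show _ = -(A + B) + _
      module
    · show -(g (Jm (Jm A))) + g (Jp (Jp B + a • Xm) + -(g Xm) B • Xm)
        = -((A, -(g A), (0:ℝ)) + (B, g B, a)).2.1 + ((g B Xp + a * c) • ((Xp, g Xp, c) : EV V)).2.1
      ext y
      rw [map_add Jp, map_smul Jp, hJp2, hJpXm, hJm2]
      simp [map_add, map_smul, map_sub, mul_comm]
      ring_nf
      linear_combination (g Xm) y * hgsymm B Xm
    · show (0:ℝ) + -((g Xm) (Jp B + a • Xm))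
        = -((A, -(g A), (0:ℝ)) + (B, g B, a)).2.2 + ((g B Xp + a * c) • ((Xp, g Xp, c) : EV V)).2.2
      have hXmJpB : g Xm (Jp B) = - (c * g Xp B) := by
        have h := hJpskew Xm B
        rw [hJpXm] at h
        simp [map_smul] at h
        linarith
      show (0:ℝ) + -((g Xm) (Jp B + a • Xm)) = -((0:ℝ) + a) + (g B Xp + a * c) * c
      rw [map_add, map_smul]
      simp only [smul_eq_mul]
      rw [hXmJpB, hXm]
      linear_combination c * hgsymm Xp B
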